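/- arXiv:1203.6879 — 5 statements merged into one kernel-verified Lean document; each statement's English description precedes it below -/
import Mathlib

section
/- Let ψ : [0,∞) → ℝ be continuous with ψ(0) ≥ 1. Suppose φ, η : [0,∞) → ℝ are continuous functions such that: (i) φ = ψ + η; (ii) φ(t) ≥ 1 for all t ≥ 0; (iii) η is nondecreasing and η(0) = 0; (iv) η is constant on every interval [a,b] ⊆ [0,∞) on which φ(s) > 1 for all s ∈ [a,b]. Then φ = Γ(ψ) and η = Γ(ψ) − ψ. -/
open Set Filter Topology

/-!
The regulator `η` is pinned down by showing `inf_{[0,t]} (ψ ∧ 1) = 1 - η t`. The bound `≥` holds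
because `ψ = φ - η ≥ 1 - η t` on `[0,t]`. For `≤`, let `c` be the first time in `[0,t]` at which
`η` reaches `η t`. If `c > 0` and `φ c > 1`, then `φ > 1` on some `[a,c]` with `0 ≤ a < c`, so `η`
is flat there and already equals `η t` at `a`, contradicting the choice of `c`. Hence `c = 0`
(and then `η t = 0`) or `φ c ≤ 1`, i.e. `ψ c ≤ 1 - η t`.
-/

/-- The Skorohod map with reflection at 1:
`Γ(ψ)(t) = (ψ(t) + 1) − inf_{0 ≤ s ≤ t} (ψ(s) ∧ 1)`. -/
noncomputable def skorohod (ψ : ℝ → ℝ) (t : ℝ) : ℝ :=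
  (ψ t + 1) - sInf ((fun s => min (ψ s) 1) '' Icc 0 t)

theorem exists_Icc_subset_of_continuousAt_of_lt {f : ℝ → ℝ} {c y : ℝ} (hc : 0 < c)
    (hf : ContinuousAt f c) (hy : y < f c) :
    ∃ a ∈ Ico 0 c, ∀ s ∈ Icc a c, y < f s := by
  have hnhds : {s | 0 < s ∧ y < f s} ∈ 𝓝[≤] c :=
    mem_nhdsWithin_of_mem_nhds ((eventually_gt_nhds hc).and (hf.eventually_const_lt hy))
  obtain ⟨a, hac, hsub⟩ := mem_nhdsLE_iff_exists_Icc_subset.1 hnhds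
  exact ⟨a, ⟨(hsub (left_mem_Icc.2 hac.le)).1.le, hac⟩, fun s hs => (hsub hs).2⟩

theorem exists_first_hit_of_flat {φ η : ℝ → ℝ} {t : ℝ} (ht : 0 ≤ t)
    (hφc : ContinuousOn φ (Ici 0)) (hηc : ContinuousOn η (Ici 0))
    (hflat : ∀ a b : ℝ, 0 ≤ a → a ≤ b → (∀ s ∈ Icc a b, 1 < φ s) →
      ∀ s ∈ Icc a b, η s = η a) :
    ∃ c ∈ Icc 0 t, η c = η t ∧ (c = 0 ∨ φ c ≤ 1) := by
  set T := Icc 0 t ∩ η ⁻¹' {η t}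
  have hT : IsCompact T :=
    isCompact_Icc.of_isClosed_subset ((hηc.mono Icc_subset_Ici_self).preimage_isClosed_of_isClosed
      isClosed_Icc isClosed_singleton) inter_subset_left
  obtain ⟨⟨hc0, hct⟩, hηc_eq⟩ := hT.sInf_mem ⟨t, ⟨ht, le_rfl⟩, rfl⟩
  refine ⟨sInf T, ⟨hc0, hct⟩, hηc_eq, ?_⟩
  rcases hc0.eq_or_lt with hzero | hpos
  · exact .inl hzero.symm
  refine .inr (not_lt.1 fun hlt => ?_)
  obtain ⟨a, ⟨ha0, hac⟩, hgt⟩ :=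
    exists_Icc_subset_of_continuousAt_of_lt hpos (hφc.continuousAt (Ici_mem_nhds hpos)) hlt
  have haT : a ∈ T :=
    ⟨⟨ha0, hac.le.trans hct⟩,
      (hflat a _ ha0 hac.le hgt _ (right_mem_Icc.2 hac.le)).symm.trans hηc_eq⟩
  exact (csInf_le hT.bddBelow haT).not_gt hac

theorem skorohod_characterization_general (ψ φ η : ℝ → ℝ)
    (hφc : ContinuousOn φ (Ici 0)) (hηc : ContinuousOn η (Ici 0))
    (hsum : ∀ t : ℝ, 0 ≤ t → φ t = ψ t + η t)
    (hφ1 : ∀ t : ℝ, 0 ≤ t → 1 ≤ φ t)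
    (hηmono : MonotoneOn η (Ici 0)) (hη0 : η 0 = 0)
    (hflat : ∀ a b : ℝ, 0 ≤ a → a ≤ b → (∀ s ∈ Icc a b, 1 < φ s) →
      ∀ s ∈ Icc a b, η s = η a) :
    ∀ t : ℝ, 0 ≤ t → φ t = skorohod ψ t ∧ η t = skorohod ψ t - ψ t := by
  intro t ht
  have hη_le {s : ℝ} (hs : s ∈ Icc 0 t) : η s ≤ η t := hηmono hs.1 ht hs.2
  have hlower : ∀ s ∈ Icc 0 t, 1 - η t ≤ min (ψ s) 1 := fun s hs =>
    le_min (by linarith [hsum s hs.1, hφ1 s hs.1, hη_le hs])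
      (by linarith [hη_le (left_mem_Icc.2 ht)])
  obtain ⟨c, hc, hηc_eq, hc_cases⟩ := exists_first_hit_of_flat ht hφc hηc hflat
  have hupper : min (ψ c) 1 ≤ 1 - η t := by
    rcases hc_cases with rfl | hφc_le
    · rw [← hηc_eq, hη0, sub_zero]; exact min_le_right _ _
    · exact (min_le_left _ _).trans (by linarith [hsum c hc.1])
  have hinf : sInf ((fun s => min (ψ s) 1) '' Icc 0 t) = 1 - η t :=
    IsLeast.csInf_eq ⟨⟨c, hc, le_antisymm hupper (hlower c hc)⟩,
      forall_mem_image.2 hlower⟩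
  have := hsum t ht
  constructor <;> · rw [skorohod, hinf]; linarith

/-- Characterization of the Skorohod map: if `ψ` is continuous with `ψ(0) ≥ 1`,
and continuous `φ, η` satisfy (i) `φ = ψ + η` on `[0,∞)`; (ii) `φ ≥ 1` on
`[0,∞)`; (iii) `η` is nondecreasing on `[0,∞)` with `η(0) = 0`; (iv) `η` is
constant on every interval `[a,b] ⊆ [0,∞)` on which `φ > 1`; then `φ = Γ(ψ)`
and `η = Γ(ψ) − ψ` on `[0,∞)`. -/
theorem skorohod_characterization (ψ φ η : ℝ → ℝ)
    (hψ : ContinuousOn ψ (Ici 0)) (h0 : 1 ≤ ψ 0)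
    (hφc : ContinuousOn φ (Ici 0)) (hηc : ContinuousOn η (Ici 0))
    (hsum : ∀ t : ℝ, 0 ≤ t → φ t = ψ t + η t)
    (hφ1 : ∀ t : ℝ, 0 ≤ t → 1 ≤ φ t)
    (hηmono : MonotoneOn η (Ici 0)) (hη0 : η 0 = 0)
    (hflat : ∀ a b : ℝ, 0 ≤ a → a ≤ b → (∀ s ∈ Icc a b, 1 < φ s) →
      ∀ s ∈ Icc a b, η s = η a) :
    ∀ t : ℝ, 0 ≤ t → φ t = skorohod ψ t ∧ η t = skorohod ψ t - ψ t :=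
  skorohod_characterization_general ψ φ η hφc hηc hsum hφ1 hηmono hη0 hflat
end

section
/- Let c₁ < 0, α₁ > 0, λ₁ > 0 be real constants and let p be the density p(x) = θ x⁻¹ exp(2c₁x/α₁) on [1,∞). Then for every twice continuously differentiable function φ : ℝ → ℝ with compact support, the Echeverria-type identity holds: ∫_1^∞ ( c₁ λ₁ x φ′(x) + (1/2) α₁ λ₁ x φ″(x) ) p(x) dx = −(p(1)/2) · α₁ λ₁ · φ′(1). -/
open Set MeasureTheory Filter Topology

/-!
With `k = 2c₁/α₁`, the density is `θ x⁻¹ e^{kx}` on `[1, ∞)`, and the factor `x` of the generator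
cancels `x⁻¹`: there `(𝓛₁φ) p = (α₁λ₁θ/2) (φ' e^{kx})'`. Since `φ'` has compact support, the
fundamental theorem of calculus on `(1, ∞)` leaves only the boundary term
`-(α₁λ₁θ/2) φ'(1) e^k = -(p(1)/2) α₁λ₁ φ'(1)`.
-/

theorem integral_Ioi_deriv_eq_neg_of_hasCompactSupport {g : ℝ → ℝ} (hg : ContDiff ℝ 1 g)
    (hgc : HasCompactSupport g) (a : ℝ) : ∫ x in Ioi a, deriv g x = -g a := by
  have hderiv : ∀ x ∈ Ici a, HasDerivAt g (deriv g x) x := fun x _ ↦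
    (hg.differentiable one_ne_zero x).hasDerivAt
  have hint : IntegrableOn (deriv g) (Ioi a) :=
    ((hg.continuous_deriv le_rfl).integrable_of_hasCompactSupport hgc.deriv).integrableOn
  have hlim : Tendsto g atTop (𝓝 0) := hgc.is_zero_at_infty.mono_left atTop_le_cocompact
  simpa using integral_Ioi_of_hasDerivAt_of_tendsto' hderiv hint hlim

theorem generator_mul_density_eq_deriv {f : ℝ → ℝ} {x : ℝ} (c α lam : ℝ) (hα : α ≠ 0)
    (hx : x ≠ 0) (hf : DifferentiableAt ℝ f x) :
    (c * lam * x * f x + (1 / 2) * α * lam * x * deriv f x) * (x⁻¹ * Real.exp (2 * c * x / α)) =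
      α * lam / 2 * deriv (fun y ↦ f y * Real.exp (2 * c * y / α)) x := by
  have hexp : HasDerivAt (fun y ↦ Real.exp (2 * c * y / α))
      (Real.exp (2 * c * x / α) * (2 * c / α)) x := by
    simpa [mul_div_right_comm] using ((hasDerivAt_id x).const_mul (2 * c / α)).exp
  have hprod : HasDerivAt (fun y ↦ f y * Real.exp (2 * c * y / α))
      (deriv f x * Real.exp (2 * c * x / α) + f x * (Real.exp (2 * c * x / α) * (2 * c / α))) x :=
    hf.hasDerivAt.mul hexp
  rw [hprod.deriv]
  field_simp
  ring

theorem echeverria_identity_general (c₁ α₁ lam₁ θ : ℝ) (p : ℝ → ℝ)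
    (hα₁ : 0 < α₁)
    (hp : ∀ x : ℝ, 1 ≤ x → p x = θ * x⁻¹ * Real.exp (2 * c₁ * x / α₁))
    (φ : ℝ → ℝ) (hφ : ContDiff ℝ 2 φ) (hφc : HasCompactSupport φ) :
    ∫ x in Ici (1 : ℝ),
        (c₁ * lam₁ * x * deriv φ x + (1 / 2) * α₁ * lam₁ * x * deriv (deriv φ) x) * p x =
      -(p 1 / 2) * (α₁ * lam₁) * deriv φ 1 := by
  set g : ℝ → ℝ := fun y ↦ deriv φ y * Real.exp (2 * c₁ * y / α₁)
  have hφ' : ContDiff ℝ 1 (deriv φ) := hφ.deriv'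
  have hg : ContDiff ℝ 1 g := hφ'.mul (by fun_prop)
  have hgc : HasCompactSupport g := hφc.deriv.mul_right
  have hintegrand : ∀ x ∈ Ioi (1 : ℝ),
      (c₁ * lam₁ * x * deriv φ x + (1 / 2) * α₁ * lam₁ * x * deriv (deriv φ) x) * p x =
        θ * (α₁ * lam₁ / 2) * deriv g x := fun x hx ↦ by
    rw [hp x (le_of_lt hx), mul_assoc θ, mul_left_comm, generator_mul_density_eq_deriv c₁ α₁ lam₁
      hα₁.ne' (by linarith [mem_Ioi.mp hx]) (hφ'.differentiable one_ne_zero x), mul_assoc]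
  rw [integral_Ici_eq_integral_Ioi, setIntegral_congr_fun measurableSet_Ioi hintegrand,
    integral_const_mul, integral_Ioi_deriv_eq_neg_of_hasCompactSupport hg hgc, hp 1 le_rfl]
  simp only [g, inv_one, mul_one]
  ring

/-- Echeverria-type identity for the stationary density
`p(x) = θ x⁻¹ exp(2c₁x/α₁)` on `[1,∞)` (and `p = 0` on `(-∞,1)`), with
`θ = (∫_1^∞ x⁻¹ exp(2c₁x/α₁) dx)⁻¹`: for every `C²` compactly supported `φ`,
`∫_1^∞ (c₁λ₁ x φ'(x) + (1/2) α₁λ₁ x φ''(x)) p(x) dx = −(p(1)/2) α₁λ₁ φ'(1)`,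
where `lam₁` denotes the constant `λ₁ > 0`. -/
theorem echeverria_identity (c₁ α₁ lam₁ θ : ℝ) (p : ℝ → ℝ)
    (hc₁ : c₁ < 0) (hα₁ : 0 < α₁) (hlam₁ : 0 < lam₁)
    (hθ : θ = (∫ x in Ici (1 : ℝ), x⁻¹ * Real.exp (2 * c₁ * x / α₁))⁻¹)
    (hp : ∀ x : ℝ, 1 ≤ x → p x = θ * x⁻¹ * Real.exp (2 * c₁ * x / α₁))
    (hp0 : ∀ x : ℝ, x < 1 → p x = 0)
    (φ : ℝ → ℝ) (hφ : ContDiff ℝ 2 φ) (hφc : HasCompactSupport φ) :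
    ∫ x in Ici (1 : ℝ),
        (c₁ * lam₁ * x * deriv φ x + (1 / 2) * α₁ * lam₁ * x * deriv (deriv φ) x) * p x =
      -(p 1 / 2) * (α₁ * lam₁) * deriv φ 1 :=
  echeverria_identity_general c₁ α₁ lam₁ θ p hα₁ hp φ hφ hφc
end

section
/- Let (μ⁽ⁿ⁾)_{n≥1} be probability distributions on ℕ satisfying: (a) the mean m⁽ⁿ⁾ := Σ_k k μ⁽ⁿ⁾(k) equals 1 + c⁽ⁿ⁾/n with c⁽ⁿ⁾ < 0 for every n and c⁽ⁿ⁾ → c for some c < 0; (b) α⁽ⁿ⁾ := Σ_k (k−1)² μ⁽ⁿ⁾(k) ∈ (0,∞) for every n and α⁽ⁿ⁾ → α for some α ∈ (0,∞); (c) for some δ̄ > 0, sup_n Σ_k e^{δ̄ k} μ⁽ⁿ⁾(k) < ∞. Then there exist δ₀ ∈ (0, δ̄] and constants d₁, d₂ ∈ (0,∞) such that for every δ ∈ [0, δ₀] and every n ≥ 1, −δ d₂ ≤ Σ_{k=0}^∞ n² ( e^{(k−1)δ/n} − 1 ) μ⁽ⁿ⁾(k) ≤ −δ d₁ (all the series here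 being absolutely convergent). -/
/-!
Write `x = (k - 1) δ / n`. Since `e^x - 1 = x + (e^x - 1 - x)` and the mean offspring is `1 + c⁽ⁿ⁾/n`,
the drift equals `δ c⁽ⁿ⁾ + R`, where the Taylor remainder `R = Σ n² (e^x - 1 - x) μ⁽ⁿ⁾(k)` is
nonnegative and, because `e^x - 1 - x ≤ x² e^{|x|}` and `(k - 1)²` is dominated by an exponential,
is at most `δ² D M` with `M` the uniform bound on the exponential moments. As `c⁽ⁿ⁾` stays in a
compact subinterval of `(-∞, 0)`, the linear term wins for `δ` small.
-/

open Filter Topology Real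

theorem Real.exp_sub_one_sub_le_sq_mul_exp_abs (x : ℝ) : exp x - 1 - x ≤ x ^ 2 * exp |x| := by
  have hinv : exp (-x) * exp x = 1 := by rw [← exp_add, neg_add_cancel, exp_zero]
  rcases le_or_gt 0 x with hx | hx
  · rw [abs_of_nonneg hx]
    have hsub : exp x - 1 ≤ x * exp x := by nlinarith [add_one_le_exp (-x), exp_pos x]
    nlinarith [add_one_le_exp x]
  · rw [abs_of_neg hx]
    have hneg : 1 ≤ exp (-x) := one_le_exp (by linarith)
    have hquad : exp x ≤ 1 + x + x ^ 2 := by nlinarith [add_one_le_exp (-x), exp_pos x]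
    nlinarith

theorem Real.sq_le_mul_exp_mul_abs {t : ℝ} (ht : 0 < t) (y : ℝ) :
    y ^ 2 ≤ 2 / t ^ 2 * exp (t * |y|) := by
  have h := quadratic_le_exp_of_nonneg (mul_nonneg ht.le (abs_nonneg y))
  rw [div_mul_eq_mul_div, le_div_iff₀ (by positivity)]
  nlinarith [mul_nonneg ht.le (abs_nonneg y), mul_pow t |y| 2, sq_abs y]

theorem sq_mul_exp_sub_one_sub_le {s δ δbar : ℝ} (hs : 1 ≤ s) (hδ : 0 ≤ δ) (hδbar : 0 < δbar)
    (hδδbar : δ ≤ δbar / 2) (y : ℝ) :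
    s ^ 2 * (exp (y * δ / s) - 1 - y * δ / s) ≤ δ ^ 2 * (8 / δbar ^ 2) * exp (δbar * |y|) := by
  have hs0 : 0 < s := by linarith
  have habs : |y * δ / s| ≤ δbar / 2 * |y| := by
    rw [abs_div, abs_mul, abs_of_nonneg hδ, abs_of_pos hs0]
    calc |y| * δ / s ≤ |y| * δ := div_le_self (by positivity) hs
      _ ≤ δbar / 2 * |y| := by nlinarith [abs_nonneg y]
  have hsq : s ^ 2 * (y * δ / s) ^ 2 = δ ^ 2 * y ^ 2 := by field_simp
  have hy := sq_le_mul_exp_mul_abs (half_pos hδbar) y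
  calc s ^ 2 * (exp (y * δ / s) - 1 - y * δ / s)
      ≤ s ^ 2 * ((y * δ / s) ^ 2 * exp |y * δ / s|) := by
        gcongr; exact exp_sub_one_sub_le_sq_mul_exp_abs _
    _ = δ ^ 2 * y ^ 2 * exp |y * δ / s| := by rw [← mul_assoc, hsq]
    _ ≤ δ ^ 2 * (2 / (δbar / 2) ^ 2 * exp (δbar / 2 * |y|)) * exp (δbar / 2 * |y|) := by
        gcongr
    _ = δ ^ 2 * (8 / δbar ^ 2) * exp (δbar * |y|) := by
        rw [mul_assoc, mul_assoc, mul_assoc, ← exp_add]; congr 2 <;> ring_nf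

theorem exists_hasSum_exp_drift {p : ℕ → ℝ} {s δ δbar a E : ℝ} (hp : ∀ k, 0 ≤ p k)
    (hprob : HasSum p 1) (hmean : HasSum (fun k : ℕ => (k : ℝ) * p k) (1 + a / s))
    (hmgf : HasSum (fun k : ℕ => exp (δbar * k) * p k) E)
    (hs : 1 ≤ s) (hδ : 0 ≤ δ) (hδbar : 0 < δbar) (hδδbar : δ ≤ δbar / 2) :
    ∃ R, 0 ≤ R ∧ R ≤ δ ^ 2 * (8 / δbar ^ 2 * exp δbar) * E ∧
      HasSum (fun k : ℕ => s ^ 2 * (exp (((k : ℝ) - 1) * δ / s) - 1) * p k) (δ * a + R) := by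
  have hs0 : s ≠ 0 := by positivity
  set r : ℕ → ℝ := fun k => s ^ 2 * (exp (((k : ℝ) - 1) * δ / s) - 1 - ((k : ℝ) - 1) * δ / s) * p k
  have hr0 : ∀ k, 0 ≤ r k := fun k =>
    mul_nonneg (mul_nonneg (sq_nonneg s) (by linarith [add_one_le_exp (((k : ℝ) - 1) * δ / s)]))
      (hp k)
  have hr_le : ∀ k, r k ≤ δ ^ 2 * (8 / δbar ^ 2 * exp δbar) * (exp (δbar * k) * p k) := by
    intro k
    have hk : |(k : ℝ) - 1| ≤ 1 + k := by rw [abs_le]; constructor <;> linarith [k.cast_nonneg (α := ℝ)]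
    have hexp : exp (δbar * |(k : ℝ) - 1|) ≤ exp δbar * exp (δbar * k) := by
      rw [← exp_add]; exact exp_le_exp.2 (by nlinarith)
    calc r k ≤ δ ^ 2 * (8 / δbar ^ 2) * exp (δbar * |(k : ℝ) - 1|) * p k :=
          mul_le_mul_of_nonneg_right (sq_mul_exp_sub_one_sub_le hs hδ hδbar hδδbar _) (hp k)
      _ ≤ δ ^ 2 * (8 / δbar ^ 2) * (exp δbar * exp (δbar * k)) * p k := by gcongr; exact hp k
      _ = _ := by ring
  have hr : HasSum r (∑' k, r k) :=
    (Summable.of_nonneg_of_le hr0 hr_le (hmgf.summable.mul_left _)).hasSum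
  refine ⟨∑' k, r k, tsum_nonneg hr0, ?_, ?_⟩
  · exact hasSum_le hr_le hr (hmgf.mul_left _)
  · have hlin : HasSum (fun k : ℕ => s * δ * (((k : ℝ) - 1) * p k)) (s * δ * (a / s)) := by
      refine HasSum.mul_left _ ?_
      convert hmean.sub hprob using 1 <;> first | (ext k; ring) | ring
    convert hlin.add hr using 1
    · ext k; simp only [r]; field_simp; ring
    · field_simp

theorem exists_pos_bounds_of_tendsto_neg {c : ℕ → ℝ} {cLim : ℝ} (hc : ∀ n, 1 ≤ n → c n < 0)
    (hcLim : Tendsto c atTop (𝓝 cLim)) (hcLim0 : cLim < 0) :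
    ∃ b B : ℝ, 0 < b ∧ 0 < B ∧ ∀ n, 1 ≤ n → -B ≤ c n ∧ c n ≤ -b := by
  obtain ⟨L, hL⟩ := hcLim.bddBelow_range
  obtain ⟨N, hN⟩ := eventually_atTop.1 (hcLim.eventually (gt_mem_nhds (by linarith : cLim < cLim / 2)))
  obtain ⟨m, hm, hmax⟩ := (Finset.Icc 1 (N + 1)).exists_max_image c ⟨1, by simp⟩
  refine ⟨min (-cLim / 2) (-c m), max 1 (-L), lt_min (by linarith) ?_, by positivity,
    fun n hn => ⟨?_, ?_⟩⟩
  · linarith [hc m (Finset.mem_Icc.1 hm).1]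
  · linarith [le_max_right 1 (-L), hL ⟨n, rfl⟩]
  · rcases le_or_gt N n with hNn | hnN
    · linarith [hN n hNn, min_le_left (-cLim / 2) (-c m)]
    · linarith [hmax n (Finset.mem_Icc.2 ⟨hn, by omega⟩), min_le_right (-cLim / 2) (-c m)]

theorem branching_exponential_drift_bound_general
    (μ : ℕ → ℕ → ℝ) (c : ℕ → ℝ) (cLim δbar : ℝ)
    (hμnn : ∀ n k, 0 ≤ μ n k)
    (hμprob : ∀ n, 1 ≤ n → Summable (μ n) ∧ ∑' k, μ n k = 1)
    (hmean : ∀ n, 1 ≤ n → Summable (fun k : ℕ => (k : ℝ) * μ n k) ∧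
      ∑' k : ℕ, (k : ℝ) * μ n k = 1 + c n / n)
    (hc : ∀ n, 1 ≤ n → c n < 0)
    (hcLim : Tendsto c atTop (nhds cLim)) (hcLim0 : cLim < 0)
    (hδbar : 0 < δbar)
    (hmgf : ∃ M : ℝ, ∀ n, 1 ≤ n →
      Summable (fun k : ℕ => Real.exp (δbar * k) * μ n k) ∧
      ∑' k : ℕ, Real.exp (δbar * k) * μ n k ≤ M) :
    ∃ δ₀ d₁ d₂ : ℝ, 0 < δ₀ ∧ δ₀ ≤ δbar ∧ 0 < d₁ ∧ 0 < d₂ ∧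
      ∀ δ : ℝ, 0 ≤ δ → δ ≤ δ₀ → ∀ n : ℕ, 1 ≤ n →
        Summable (fun k : ℕ =>
          (n : ℝ) ^ 2 * (Real.exp (((k : ℝ) - 1) * δ / n) - 1) * μ n k) ∧
        -(δ * d₂) ≤
          (∑' k : ℕ, (n : ℝ) ^ 2 * (Real.exp (((k : ℝ) - 1) * δ / n) - 1) * μ n k) ∧
        (∑' k : ℕ, (n : ℝ) ^ 2 * (Real.exp (((k : ℝ) - 1) * δ / n) - 1) * μ n k) ≤
          -(δ * d₁) := by
  obtain ⟨M, hM⟩ := hmgf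
  obtain ⟨b, B, hb, hB, hbB⟩ := exists_pos_bounds_of_tendsto_neg hc hcLim hcLim0
  set K := 8 / δbar ^ 2 * exp δbar * max M 1
  have hK : 0 < K := by positivity
  refine ⟨min (δbar / 2) (b / (2 * K)), b / 2, B, by positivity,
    (min_le_left _ _).trans (half_le_self hδbar.le), by positivity, hB, fun δ hδ hδδ₀ n hn => ?_⟩
  have hn1 : (1 : ℝ) ≤ n := by exact_mod_cast hn
  obtain ⟨R, hR0, hRle, hdrift⟩ := exists_hasSum_exp_drift (hμnn n)
    ((hμprob n hn).2 ▸ (hμprob n hn).1.hasSum) ((hmean n hn).2 ▸ (hmean n hn).1.hasSum)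
    (hM n hn).1.hasSum hn1 hδ hδbar (hδδ₀.trans (min_le_left _ _))
  have hRK : R ≤ δ * (b / 2) := calc
    R ≤ δ ^ 2 * (8 / δbar ^ 2 * exp δbar) * max M 1 :=
      hRle.trans (by gcongr; exact (hM n hn).2.trans (le_max_left _ _))
    _ = δ * (δ * K) := by simp only [K]; ring
    _ ≤ δ * (b / (2 * K) * K) := by gcongr; exact hδδ₀.trans (min_le_right _ _)
    _ = δ * (b / 2) := by field_simp
  rw [hdrift.tsum_eq]
  refine ⟨hdrift.summable, ?_, ?_⟩
  · linarith [mul_le_mul_of_nonneg_left (hbB n hn).1 hδ]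
  · linarith [mul_le_mul_of_nonneg_left (hbB n hn).2 hδ]

/-- For a sequence of offspring distributions `μ⁽ⁿ⁾` on `ℕ` that are critical
from below (mean `1 + c⁽ⁿ⁾/n` with `c⁽ⁿ⁾ < 0`, `c⁽ⁿ⁾ → c < 0`), with second
moments `α⁽ⁿ⁾ → α ∈ (0,∞)` and uniformly bounded exponential moments of order
`δ̄`, there exist `δ₀ ∈ (0, δ̄]` and `d₁, d₂ ∈ (0,∞)` such that for all
`δ ∈ [0, δ₀]` and `n ≥ 1`,
`−δ d₂ ≤ Σ_k n² (e^{(k−1)δ/n} − 1) μ⁽ⁿ⁾(k) ≤ −δ d₁`,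
the series being absolutely (i.e. `Summable`-) convergent. -/
theorem branching_exponential_drift_bound
    (μ : ℕ → ℕ → ℝ) (c : ℕ → ℝ) (cLim αLim δbar : ℝ)
    (hμnn : ∀ n k, 0 ≤ μ n k)
    (hμprob : ∀ n, 1 ≤ n → Summable (μ n) ∧ ∑' k, μ n k = 1)
    (hmean : ∀ n, 1 ≤ n → Summable (fun k : ℕ => (k : ℝ) * μ n k) ∧
      ∑' k : ℕ, (k : ℝ) * μ n k = 1 + c n / n)
    (hc : ∀ n, 1 ≤ n → c n < 0)
    (hcLim : Tendsto c atTop (nhds cLim)) (hcLim0 : cLim < 0)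
    (hα : ∀ n, 1 ≤ n → Summable (fun k : ℕ => ((k : ℝ) - 1) ^ 2 * μ n k) ∧
      0 < ∑' k : ℕ, ((k : ℝ) - 1) ^ 2 * μ n k)
    (hαLim : Tendsto (fun n : ℕ => ∑' k : ℕ, ((k : ℝ) - 1) ^ 2 * μ n k)
      atTop (nhds αLim))
    (hαLim0 : 0 < αLim)
    (hδbar : 0 < δbar)
    (hmgf : ∃ M : ℝ, ∀ n, 1 ≤ n →
      Summable (fun k : ℕ => Real.exp (δbar * k) * μ n k) ∧
      ∑' k : ℕ, Real.exp (δbar * k) * μ n k ≤ M) :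
    ∃ δ₀ d₁ d₂ : ℝ, 0 < δ₀ ∧ δ₀ ≤ δbar ∧ 0 < d₁ ∧ 0 < d₂ ∧
      ∀ δ : ℝ, 0 ≤ δ → δ ≤ δ₀ → ∀ n : ℕ, 1 ≤ n →
        Summable (fun k : ℕ =>
          (n : ℝ) ^ 2 * (Real.exp (((k : ℝ) - 1) * δ / n) - 1) * μ n k) ∧
        -(δ * d₂) ≤
          (∑' k : ℕ, (n : ℝ) ^ 2 * (Real.exp (((k : ℝ) - 1) * δ / n) - 1) * μ n k) ∧
        (∑' k : ℕ, (n : ℝ) ^ 2 * (Real.exp (((k : ℝ) - 1) * δ / n) - 1) * μ n k) ≤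
          -(δ * d₁) :=
  branching_exponential_drift_bound_general μ c cLim δbar hμnn hμprob hmean hc hcLim hcLim0 hδbar
    hmgf
end

section
/- Let (Ω, 𝓕, P) be a probability space and X : [0,∞) × Ω → ℝ a jointly measurable process such that for every u > 0 the map ω ↦ ∫_0^u X_s(ω) ds is well defined and integrable. Let m ∈ ℝ and set F(u) := E| (1/u) ∫_0^u X_s ds − m | for u > 0. Suppose F(u) → 0 as u → ∞. Let 0 < t₀ ≤ T < ∞ and let (a_n) be a sequence of positive reals with a_n → ∞ monotonically. Then there exists a sequence (h_n) of positive reals with h_n → 0 such that sup_{t ∈ [t₀, T]} E| (1/(h_n a_n)) ∫_{t a_n}^{t a_n + h_n a_n} X_s ds − m | → 0 as n → ∞. -/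
/-!
The window average over `[s, s + w]` is an affine combination of the averages over `[0, s + w]`
and `[0, s]` with coefficients `(s + w) / w` and `s / w`, so its `L¹` distance to `m` is at most
`((s + w) / w) F(s + w) + (s / w) F(s)`. For `s = t aₙ`, `w = hₙ aₙ` and `t ∈ [t₀, T]` this is at
most `(2T / hₙ + 1) gₙ`, where `gₙ = sup_{u ≥ t₀ aₙ} F(u) → 0`. Taking `hₙ → 0` more slowly than
`gₙ`, e.g. `hₙ = √gₙ + 1 / (n + 1)`, makes this bound tend to `0` uniformly in `t`.
-/

open MeasureTheory Filter Set Topology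

theorem setIntegral_Icc_eq_sub {E : Type*} [NormedAddCommGroup E] [NormedSpace ℝ E]
    {f : ℝ → E} {a b c : ℝ} (hab : a ≤ b) (hbc : b ≤ c) (hf : IntegrableOn f (Icc a c)) :
    ∫ x in Icc b c, f x = (∫ x in Icc a c, f x) - ∫ x in Icc a b, f x := by
  have hac := hab.trans hbc
  rw [integral_Icc_eq_integral_Ioc, integral_Icc_eq_integral_Ioc, integral_Icc_eq_integral_Ioc,
    ← intervalIntegral.integral_of_le hbc, ← intervalIntegral.integral_of_le hac,
    ← intervalIntegral.integral_of_le hab, intervalIntegral.integral_interval_sub_left]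
  · exact (hf.mono_set (by rw [uIcc_of_le hac])).intervalIntegrable
  · exact (hf.mono_set (by rw [uIcc_of_le hab]; exact Icc_subset_Icc_right hbc)).intervalIntegrable

theorem tendsto_sSup_image_Ici {F : ℝ → ℝ} (hF₀ : ∀ u, 0 ≤ F u) (hF : Tendsto F atTop (𝓝 0)) :
    Tendsto (fun v => sSup (F '' Ici v)) atTop (𝓝 0) := by
  rw [Metric.tendsto_atTop]
  intro ε hε
  obtain ⟨U, hU⟩ := eventually_atTop.mp (hF.eventually_lt_const (half_pos hε))
  refine ⟨U, fun v hv => ?_⟩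
  have hle : sSup (F '' Ici v) ≤ ε / 2 :=
    Real.sSup_le (by rintro _ ⟨u, hu, rfl⟩; exact (hU u (hv.trans hu)).le) (half_pos hε).le
  have hnonneg : 0 ≤ sSup (F '' Ici v) := Real.sSup_nonneg (by rintro _ ⟨u, -, rfl⟩; exact hF₀ u)
  rw [Real.dist_eq, sub_zero, abs_of_nonneg hnonneg]
  linarith

theorem eventually_le_sSup_image_Ici {F : ℝ → ℝ} {c : ℝ} (hF : Tendsto F atTop (𝓝 c)) :
    ∀ᶠ v in atTop, ∀ u ≥ v, F u ≤ sSup (F '' Ici v) := by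
  obtain ⟨B, hB⟩ := hF.isBoundedUnder_le
  obtain ⟨U, hU⟩ := eventually_atTop.mp hB
  filter_upwards [eventually_ge_atTop U] with v hv u hu
  exact le_csSup ⟨B, by rintro _ ⟨u', hu', rfl⟩; exact hU u' (hv.trans hu')⟩ ⟨u, hu, rfl⟩

theorem exists_tendsto_zero_forall_ge_le {F : ℝ → ℝ} (hF₀ : ∀ u, 0 ≤ F u)
    (hF : Tendsto F atTop (𝓝 0)) {b : ℕ → ℝ} (hb : Tendsto b atTop atTop) :
    ∃ g : ℕ → ℝ, (∀ n, 0 ≤ g n) ∧ Tendsto g atTop (𝓝 0) ∧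
      ∀ᶠ n in atTop, ∀ u ≥ b n, F u ≤ g n :=
  ⟨fun n => sSup (F '' Ici (b n)),
    fun n => Real.sSup_nonneg (by rintro _ ⟨u, -, rfl⟩; exact hF₀ u),
    (tendsto_sSup_image_Ici hF₀ hF).comp hb, hb.eventually (eventually_le_sSup_image_Ici hF)⟩

theorem div_le_sqrt_of_sqrt_le {g h : ℝ} (hg : 0 ≤ g) (hh : 0 < h) (hgh : √g ≤ h) :
    g / h ≤ √g := by
  rw [div_le_iff₀ hh]
  nlinarith [Real.mul_self_sqrt hg, Real.sqrt_nonneg g]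

theorem exists_pos_tendsto_zero_div_tendsto_zero {g : ℕ → ℝ} (hg₀ : ∀ n, 0 ≤ g n)
    (hg : Tendsto g atTop (𝓝 0)) :
    ∃ h : ℕ → ℝ, (∀ n, 0 < h n) ∧ Tendsto h atTop (𝓝 0) ∧
      Tendsto (fun n => g n / h n) atTop (𝓝 0) := by
  have hsqrt : Tendsto (fun n => √(g n)) atTop (𝓝 0) := by simpa using hg.sqrt
  have hpos : ∀ n, 0 < √(g n) + 1 / ((n : ℝ) + 1) := fun n => by positivity
  refine ⟨fun n => √(g n) + 1 / ((n : ℝ) + 1), hpos, ?_, ?_⟩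
  · simpa using hsqrt.add tendsto_one_div_add_atTop_nhds_zero_nat
  · refine tendsto_of_tendsto_of_tendsto_of_le_of_le tendsto_const_nhds hsqrt
      (fun n => div_nonneg (hg₀ n) (hpos n).le)
      (fun n => div_le_sqrt_of_sqrt_le (hg₀ n) (hpos n) ?_)
    simp only [le_add_iff_nonneg_right]
    positivity

theorem tendsto_sSup_image_of_eventually_le {ι : Type*} {f : ℕ → ι → ℝ} {S : Set ι} {B : ℕ → ℝ}
    (hf₀ : ∀ n i, 0 ≤ f n i) (hB₀ : ∀ n, 0 ≤ B n) (hfB : ∀ᶠ n in atTop, ∀ i ∈ S, f n i ≤ B n)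
    (hB : Tendsto B atTop (𝓝 0)) :
    Tendsto (fun n => sSup (f n '' S)) atTop (𝓝 0) := by
  refine tendsto_of_tendsto_of_tendsto_of_le_of_le' tendsto_const_nhds hB
    (Eventually.of_forall fun n => Real.sSup_nonneg ?_) ?_
  · rintro _ ⟨i, -, rfl⟩
    exact hf₀ n i
  · filter_upwards [hfB] with n hn
    exact Real.sSup_le (by rintro _ ⟨i, hi, rfl⟩; exact hn i hi) (hB₀ n)

section WindowAverage

variable {Ω : Type*} [MeasurableSpace Ω] (P : Measure Ω) (X : ℝ → Ω → ℝ) (m : ℝ)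

/-- `windowAverageError P X m 0 u` is the function `F(u)` of the statement. -/
noncomputable def windowAverageError (s w : ℝ) : ℝ :=
  ∫ ω, |(1 / w) * (∫ r in Icc s (s + w), X r ω) - m| ∂P

variable {P X m}

theorem windowAverageError_nonneg (s w : ℝ) : 0 ≤ windowAverageError P X m s w :=
  integral_nonneg fun _ => abs_nonneg _

theorem window_average_sub_eq {s w I₁ I₂ : ℝ} (hs : 0 < s) (hw : 0 < w) :
    (1 / w) * (I₂ - I₁) - m =
      ((s + w) / w) * ((1 / (s + w)) * I₂ - m) - (s / w) * ((1 / s) * I₁ - m) := by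
  have : s + w ≠ 0 := by positivity
  field_simp
  ring

theorem windowAverageError_le [IsFiniteMeasure P] {s w : ℝ} (hs : 0 < s) (hw : 0 < w)
    (hX : ∀ ω, IntegrableOn (fun r => X r ω) (Icc 0 (s + w)))
    (hint₁ : Integrable (fun ω => ∫ r in Icc 0 s, X r ω) P)
    (hint₂ : Integrable (fun ω => ∫ r in Icc 0 (s + w), X r ω) P) :
    windowAverageError P X m s w ≤
      ((s + w) / w) * windowAverageError P X m 0 (s + w) +
        (s / w) * windowAverageError P X m 0 s := by
  set A : Ω → ℝ := fun ω => (1 / (s + w)) * (∫ r in Icc 0 (s + w), X r ω) - m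
  set B : Ω → ℝ := fun ω => (1 / s) * (∫ r in Icc 0 s, X r ω) - m
  have hA : Integrable A P := (hint₂.const_mul _).sub (integrable_const m)
  have hB : Integrable B P := (hint₁.const_mul _).sub (integrable_const m)
  have hcA : 0 ≤ (s + w) / w := by positivity
  have hcB : 0 ≤ s / w := by positivity
  have hsplit : ∀ ω, (1 / w) * (∫ r in Icc s (s + w), X r ω) - m =
      ((s + w) / w) * A ω - (s / w) * B ω := fun ω => by
    rw [setIntegral_Icc_eq_sub hs.le (by linarith) (hX ω), window_average_sub_eq hs hw]
  calc windowAverageError P X m s w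
      = ∫ ω, |((s + w) / w) * A ω - (s / w) * B ω| ∂P := by
        simp only [windowAverageError, hsplit]
    _ ≤ ∫ ω, ((s + w) / w) * |A ω| + (s / w) * |B ω| ∂P := by
        refine integral_mono ((hA.const_mul _).sub (hB.const_mul _)).abs
          ((hA.abs.const_mul _).add (hB.abs.const_mul _)) fun ω => ?_
        simpa only [abs_mul, abs_of_nonneg hcA, abs_of_nonneg hcB] using
          abs_sub (((s + w) / w) * A ω) ((s / w) * B ω)
    _ = ((s + w) / w) * windowAverageError P X m 0 (s + w) +
          (s / w) * windowAverageError P X m 0 s := by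
        rw [integral_add (hA.abs.const_mul _) (hB.abs.const_mul _), integral_const_mul,
          integral_const_mul]
        simp only [windowAverageError, zero_add, A, B]

theorem windowAverageError_le_of_forall_ge_le [IsFiniteMeasure P] {s w ε : ℝ}
    (hs : 0 < s) (hw : 0 < w)
    (hX : ∀ ω, IntegrableOn (fun r => X r ω) (Icc 0 (s + w)))
    (hint : ∀ u, 0 < u → Integrable (fun ω => ∫ r in Icc 0 u, X r ω) P)
    (hε : ∀ u ≥ s, windowAverageError P X m 0 u ≤ ε) :
    windowAverageError P X m s w ≤ 2 * s * (ε / w) + ε := by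
  have hε₀ : 0 ≤ ε := (windowAverageError_nonneg _ _).trans (hε s le_rfl)
  calc windowAverageError P X m s w
      ≤ ((s + w) / w) * windowAverageError P X m 0 (s + w) +
          (s / w) * windowAverageError P X m 0 s :=
        windowAverageError_le hs hw hX (hint s hs) (hint _ (by positivity))
    _ ≤ ((s + w) / w) * ε + (s / w) * ε := by
        gcongr
        exacts [hε _ (by linarith), hε _ le_rfl]
    _ = 2 * s * (ε / w) + ε := by
        field_simp
        ring

end WindowAverage

theorem shifted_integral_averaging_general {Ω : Type*} [MeasurableSpace Ω]
    (P : Measure Ω) [IsProbabilityMeasure P] (X : ℝ → Ω → ℝ)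
    (hwd : ∀ u : ℝ, 0 < u → ∀ ω : Ω, IntegrableOn (fun s => X s ω) (Icc 0 u))
    (hint : ∀ u : ℝ, 0 < u →
      Integrable (fun ω : Ω => ∫ s in Icc (0 : ℝ) u, X s ω) P)
    (m : ℝ)
    (hF : Tendsto
      (fun u : ℝ => ∫ ω, |(1 / u) * (∫ s in Icc (0 : ℝ) u, X s ω) - m| ∂P)
      atTop (nhds 0))
    (t₀ T : ℝ) (ht₀ : 0 < t₀) (hT : t₀ ≤ T)
    (a : ℕ → ℝ)
    (hatop : Tendsto a atTop atTop) :
    ∃ h : ℕ → ℝ, (∀ n, 0 < h n) ∧ Tendsto h atTop (nhds 0) ∧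
      Tendsto (fun n : ℕ =>
        sSup ((fun t : ℝ => ∫ ω, |(1 / (h n * a n)) *
          (∫ s in Icc (t * a n) (t * a n + h n * a n), X s ω) - m| ∂P) ''
            Icc t₀ T))
        atTop (nhds 0) := by
  have hF' : Tendsto (windowAverageError P X m 0) atTop (𝓝 0) :=
    hF.congr fun u => by simp only [windowAverageError, zero_add]
  obtain ⟨g, hg₀, hg, hFg⟩ := exists_tendsto_zero_forall_ge_le (windowAverageError_nonneg 0) hF'
    (hatop.const_mul_atTop ht₀)
  obtain ⟨h, hh₀, hh, hgh⟩ := exists_pos_tendsto_zero_div_tendsto_zero hg₀ hg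
  have hT₀ : 0 ≤ T := (ht₀.trans_le hT).le
  refine ⟨h, hh₀, hh, tendsto_sSup_image_of_eventually_le
    (B := fun n => 2 * T * (g n / h n) + g n)
    (fun n t => windowAverageError_nonneg (t * a n) (h n * a n))
    (fun n => by have := hh₀ n; have := hg₀ n; positivity) ?_
    (by simpa using (hgh.const_mul (2 * T)).add hg)⟩
  filter_upwards [hatop.eventually_gt_atTop 0, hFg] with n hn hgn t ⟨ht₁, ht₂⟩
  have ht : 0 < t := ht₀.trans_le ht₁
  have hhn := hh₀ n
  have hsn : t₀ * a n ≤ t * a n := by gcongr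
  calc windowAverageError P X m (t * a n) (h n * a n)
      ≤ 2 * (t * a n) * (g n / (h n * a n)) + g n :=
        windowAverageError_le_of_forall_ge_le (by positivity) (by positivity)
          (hwd _ (by positivity)) hint fun u hu => hgn u (hsn.trans hu)
    _ = 2 * t * (g n / h n) + g n := by field_simp
    _ ≤ 2 * T * (g n / h n) + g n := by have := hg₀ n; gcongr

/-- Averaging lemma on shifted integral limits: if the time averages
`(1/u)∫_0^u X_s ds` of a jointly measurable process `X` converge to `m` in
`L¹(P)` as `u → ∞`, and `a_n → ∞` monotonically, then there is a sequence
`h_n → 0` such that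
`sup_{t ∈ [t₀,T]} E|(1/(h_n a_n)) ∫_{t a_n}^{t a_n + h_n a_n} X_s ds − m| → 0`. -/
theorem shifted_integral_averaging {Ω : Type*} [MeasurableSpace Ω]
    (P : Measure Ω) [IsProbabilityMeasure P] (X : ℝ → Ω → ℝ)
    (hXm : Measurable fun p : ℝ × Ω => X p.1 p.2)
    (hwd : ∀ u : ℝ, 0 < u → ∀ ω : Ω, IntegrableOn (fun s => X s ω) (Icc 0 u))
    (hint : ∀ u : ℝ, 0 < u →
      Integrable (fun ω : Ω => ∫ s in Icc (0 : ℝ) u, X s ω) P)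
    (m : ℝ)
    (hF : Tendsto
      (fun u : ℝ => ∫ ω, |(1 / u) * (∫ s in Icc (0 : ℝ) u, X s ω) - m| ∂P)
      atTop (nhds 0))
    (t₀ T : ℝ) (ht₀ : 0 < t₀) (hT : t₀ ≤ T)
    (a : ℕ → ℝ) (ha : ∀ n, 0 < a n) (hamono : Monotone a)
    (hatop : Tendsto a atTop atTop) :
    ∃ h : ℕ → ℝ, (∀ n, 0 < h n) ∧ Tendsto h atTop (nhds 0) ∧
      Tendsto (fun n : ℕ =>
        sSup ((fun t : ℝ => ∫ ω, |(1 / (h n * a n)) *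
          (∫ s in Icc (t * a n) (t * a n + h n * a n), X s ω) - m| ∂P) ''
            Icc t₀ T))
        atTop (nhds 0) :=
  shifted_integral_averaging_general P X hwd hint m hF t₀ T ht₀ hT a hatop
end

section
/- Let (μ⁽ⁿ⁾)_{n≥1} be probability distributions on ℕ and (λ⁽ⁿ⁾) positive reals satisfying: (a) λ⁽ⁿ⁾ → λ ∈ (0,∞); (b) the mean m⁽ⁿ⁾ := Σ_k k μ⁽ⁿ⁾(k) equals 1 + c⁽ⁿ⁾/n with c⁽ⁿ⁾ → c ∈ ℝ; (c) α⁽ⁿ⁾ := Σ_k (k−1)² μ⁽ⁿ⁾(k) ∈ (0,∞) and α⁽ⁿ⁾ → α ∈ (0,∞); (d) for every ε > 0, Σ_{l > ε√n} (l − m⁽ⁿ⁾)² μ⁽ⁿ⁾(l) → 0 as n → ∞. Let φ : ℝ → ℝ be twice continuously differentiable with compact support, and define the Taylor remainder R⁽ⁿ⁾(x) := λ⁽ⁿ⁾ n² x Σ_{k=0}^∞ [ φ(x + (k−1)/n) − φ(x) − ((k−1)/n) φ′(x) − (1/2)((k−1)/n)² φ″(x) ] μ⁽ⁿ⁾(k).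 Then for every L > 0, sup_{0 ≤ x ≤ L} |R⁽ⁿ⁾(x)| → 0 as n → ∞. -/
/-!
By Taylor's formula, with `δ` a modulus of uniform continuity of `φ''` for the tolerance `η`,
the summand of index `k` is at most `η (k-1)²/n²` when `|k-1| ≤ δn` and at most
`2‖φ''‖∞ (k-1)²/n²` otherwise. After multiplying by `λ⁽ⁿ⁾ n² x ≤ λ⁽ⁿ⁾ L`, the near jumps
contribute at most `λ⁽ⁿ⁾ L η α⁽ⁿ⁾ → λ L η α`, which is small since `η` is arbitrary.
The far jumps contribute a multiple of
`Σ_{|k-1| > δn} (k-1)² μ⁽ⁿ⁾(k) ≤ 2 Σ_{k > δ√n} (k - m⁽ⁿ⁾)² μ⁽ⁿ⁾(k) + 2 (c⁽ⁿ⁾/n)²`,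
which tends to `0` by the Lindeberg condition.
-/

open Filter Set

noncomputable def secondOrderRemainder (f : ℝ → ℝ) (x h : ℝ) : ℝ :=
  f (x + h) - f x - h * deriv f x - 1 / 2 * h ^ 2 * deriv (deriv f) x

section Taylor

variable {f : ℝ → ℝ} {x h η : ℝ}

theorem abs_sub_sub_mul_deriv_le (hf : Differentiable ℝ f)
    (hη : ∀ t ∈ uIcc 0 h, |deriv f (x + t) - deriv f x| ≤ η) :
    |f (x + h) - f x - h * deriv f x| ≤ η * |h| := by
  have hg : ∀ t, HasDerivAt (fun t => f (x + t) - t * deriv f x)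
      (deriv f (x + t) - deriv f x) t := fun t =>
    ((hf (x + t)).hasDerivAt.comp_const_add x t).sub (hasDerivAt_mul_const (deriv f x))
  have := (convex_uIcc 0 h).norm_image_sub_le_of_norm_hasDerivWithin_le
    (fun t _ => (hg t).hasDerivWithinAt) hη left_mem_uIcc right_mem_uIcc
  simpa [sub_right_comm] using this

theorem abs_secondOrderRemainder_le (hf : Differentiable ℝ f) (hf' : Differentiable ℝ (deriv f))
    (hη : ∀ t ∈ uIcc 0 h, |deriv (deriv f) (x + t) - deriv (deriv f) x| ≤ η) :
    |secondOrderRemainder f x h| ≤ η * h ^ 2 := by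
  have hg : ∀ t, HasDerivAt (fun t => f (x + t) - t * deriv f x - t ^ 2 / 2 * deriv (deriv f) x)
      (deriv f (x + t) - deriv f x - t * deriv (deriv f) x) t := fun t => by
    have := (((hf (x + t)).hasDerivAt.comp_const_add x t).sub
      (hasDerivAt_mul_const (deriv f x))).sub
        (((hasDerivAt_pow 2 t).div_const 2).mul_const (deriv (deriv f) x))
    exact this.congr_deriv (by norm_num)
  have hη₀ : 0 ≤ η := (abs_nonneg _).trans (hη 0 left_mem_uIcc)
  have hg' : ∀ t ∈ uIcc 0 h, |deriv f (x + t) - deriv f x - t * deriv (deriv f) x| ≤ η * |h| :=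
    fun t ht => calc
      _ ≤ η * |t| := abs_sub_sub_mul_deriv_le hf' fun s hs => hη s (uIcc_subset_uIcc_left ht hs)
      _ ≤ η * |h| := mul_le_mul_of_nonneg_left (by simpa using abs_sub_left_of_mem_uIcc ht) hη₀
  have := (convex_uIcc 0 h).norm_image_sub_le_of_norm_hasDerivWithin_le
    (fun t _ => (hg t).hasDerivWithinAt) hg' left_mem_uIcc right_mem_uIcc
  rw [secondOrderRemainder]
  convert this using 1
  · simp only [Real.norm_eq_abs, add_zero]; ring_nf
  · rw [sub_zero, Real.norm_eq_abs, mul_assoc, abs_mul_abs_self, sq]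

end Taylor

theorem Summable.ite_zero_of_nonneg {ι : Type*} {g : ι → ℝ} (hgs : Summable g)
    (hg : ∀ k, 0 ≤ g k) (P : ι → Prop) [DecidablePred P] :
    Summable fun k => if P k then g k else 0 :=
  hgs.of_nonneg_of_le (fun k => by split_ifs <;> simp [hg k])
    fun k => by split_ifs <;> simp [hg k]

section Remainder

variable {f : ℝ → ℝ} {M δ η : ℝ} {p : ℕ → ℝ}

theorem tsum_ite_sq_sub_one_le (hp : ∀ k, 0 ≤ p k) (hp₁ : Summable p) (hsum : ∑' k, p k = 1)
    (hp₂ : Summable fun k : ℕ => ((k : ℝ) - 1) ^ 2 * p k) {a b : ℝ} (ha : 1 ≤ a) (hb : b ≤ a)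
    (m : ℝ) :
    ∑' k : ℕ, (if a < |(k : ℝ) - 1| then ((k : ℝ) - 1) ^ 2 * p k else 0) ≤
      2 * ∑' k : ℕ, (if b < (k : ℝ) then ((k : ℝ) - m) ^ 2 * p k else 0) +
        2 * (m - 1) ^ 2 := by
  have hsq : ∀ u v w : ℝ, (u - v) ^ 2 ≤ 2 * (u - w) ^ 2 + 2 * (v - w) ^ 2 :=
    fun u v w => by nlinarith [sq_nonneg (u + v - 2 * w)]
  have hterm : ∀ (v : ℝ) (k : ℕ), 0 ≤ ((k : ℝ) - v) ^ 2 * p k := fun v k =>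
    mul_nonneg (sq_nonneg _) (hp k)
  have hpm : Summable fun k : ℕ => ((k : ℝ) - m) ^ 2 * p k :=
    ((hp₂.mul_left 2).add (hp₁.mul_left (2 * (m - 1) ^ 2))).of_nonneg_of_le (hterm m)
      fun k => by nlinarith [hsq k m 1, hp k]
  have hfar : ∀ k : ℕ, a < |(k : ℝ) - 1| → b < k := fun k hk => by
    rcases Nat.eq_zero_or_pos k with rfl | hk₀
    · norm_num at hk; linarith
    · have : (1 : ℝ) ≤ k := by exact_mod_cast hk₀
      rw [abs_of_nonneg (by linarith)] at hk; linarith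
  have hfar_sum := (hp₂.ite_zero_of_nonneg (hterm 1) fun k : ℕ => a < |(k : ℝ) - 1|).hasSum
  have hlind_sum := ((hpm.ite_zero_of_nonneg (hterm m) fun k : ℕ => b < (k : ℝ)).hasSum.mul_left
    2).add (hp₁.hasSum.mul_left (2 * (m - 1) ^ 2))
  rw [hsum, mul_one] at hlind_sum
  refine hasSum_le (fun k => ?_) hfar_sum hlind_sum
  have hpk := hp k
  split_ifs with hk hk'
  · nlinarith [hsq k 1 m]
  · exact absurd (hfar k hk) hk'
  all_goals positivity

theorem abs_secondOrderRemainder_le_of_modulus (hf : ContDiff ℝ 2 f) (hη : 0 ≤ η)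
    (hM : ∀ y, ‖deriv (deriv f) y‖ ≤ M)
    (hδ : ∀ ⦃a b⦄, dist a b ≤ δ → dist (deriv (deriv f) a) (deriv (deriv f) b) ≤ η) (x h : ℝ) :
    |secondOrderRemainder f x h| ≤ (η + if δ < |h| then 2 * M else 0) * h ^ 2 := by
  have hf₁ : Differentiable ℝ f := hf.differentiable two_ne_zero
  have hf₂ : Differentiable ℝ (deriv f) := hf.deriv'.differentiable one_ne_zero
  split_ifs with hh
  · refine (abs_secondOrderRemainder_le hf₁ hf₂ fun t _ => ?_).trans
      (mul_le_mul_of_nonneg_right (le_add_of_nonneg_left hη) (sq_nonneg h))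
    calc |deriv (deriv f) (x + t) - deriv (deriv f) x|
        ≤ ‖deriv (deriv f) (x + t)‖ + ‖deriv (deriv f) x‖ := abs_sub _ _
      _ ≤ 2 * M := by linarith [hM (x + t), hM x]
  · rw [add_zero]
    refine abs_secondOrderRemainder_le hf₁ hf₂ fun t ht => hδ ?_
    rw [Real.dist_eq, add_sub_cancel_left]
    exact (show |t| ≤ |h| by simpa using abs_sub_left_of_mem_uIcc ht).trans (not_lt.1 hh)

theorem abs_tsum_secondOrderRemainder_le (hf : ContDiff ℝ 2 f) (hη : 0 ≤ η)
    (hM : ∀ y, ‖deriv (deriv f) y‖ ≤ M)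
    (hδ : ∀ ⦃a b⦄, dist a b ≤ δ → dist (deriv (deriv f) a) (deriv (deriv f) b) ≤ η)
    (hp : ∀ k, 0 ≤ p k) (hp₂ : Summable fun k : ℕ => ((k : ℝ) - 1) ^ 2 * p k)
    {s : ℝ} (hs : 0 < s) (x : ℝ) :
    |∑' k : ℕ, secondOrderRemainder f x (((k : ℝ) - 1) / s) * p k| ≤
      (η * ∑' k : ℕ, ((k : ℝ) - 1) ^ 2 * p k +
        2 * M * ∑' k : ℕ, (if δ * s < |(k : ℝ) - 1| then ((k : ℝ) - 1) ^ 2 * p k else 0)) /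
        s ^ 2 := by
  have hfar := hp₂.ite_zero_of_nonneg (fun k => mul_nonneg (sq_nonneg _) (hp k))
    fun k : ℕ => δ * s < |(k : ℝ) - 1|
  rw [← Real.norm_eq_abs]
  refine tsum_of_norm_bounded (((hp₂.hasSum.mul_left η).add
    (hfar.hasSum.mul_left (2 * M))).div_const (s ^ 2)) fun k => ?_
  have hδs : δ < |((k : ℝ) - 1) / s| ↔ δ * s < |(k : ℝ) - 1| := by
    rw [abs_div, abs_of_pos hs, lt_div_iff₀ hs]
  rw [Real.norm_eq_abs, abs_mul, abs_of_nonneg (hp k)]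
  refine (mul_le_mul_of_nonneg_right
    (abs_secondOrderRemainder_le_of_modulus hf hη hM hδ x _) (hp k)).trans_eq ?_
  simp only [hδs]
  split_ifs <;> ring

theorem abs_scaled_tsum_secondOrderRemainder_le (hf : ContDiff ℝ 2 f) (hη : 0 ≤ η)
    (hM : ∀ y, ‖deriv (deriv f) y‖ ≤ M)
    (hδ : ∀ ⦃a b⦄, dist a b ≤ δ → dist (deriv (deriv f) a) (deriv (deriv f) b) ≤ η)
    (hp : ∀ k, 0 ≤ p k) (hp₁ : Summable p) (hsum : ∑' k, p k = 1)
    (hp₂ : Summable fun k : ℕ => ((k : ℝ) - 1) ^ 2 * p k)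
    {s b lam x L : ℝ} (hs : 0 < s) (hδs : 1 ≤ δ * s) (hb : b ≤ δ * s) (hlam : 0 ≤ lam)
    (hx : x ∈ Icc 0 L) (m : ℝ) :
    |lam * s ^ 2 * x * ∑' k : ℕ, secondOrderRemainder f x (((k : ℝ) - 1) / s) * p k| ≤
      lam * L * (η * ∑' k : ℕ, ((k : ℝ) - 1) ^ 2 * p k + 2 * M *
        (2 * ∑' k : ℕ, (if b < (k : ℝ) then ((k : ℝ) - m) ^ 2 * p k else 0) +
          2 * (m - 1) ^ 2)) := by
  have hM₀ : 0 ≤ M := (norm_nonneg _).trans (hM 0)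
  have hx₀ := hx.1
  have hL₀ := hx.1.trans hx.2
  have hfar₀ :
      0 ≤ ∑' k : ℕ, (if δ * s < |(k : ℝ) - 1| then ((k : ℝ) - 1) ^ 2 * p k else 0) :=
    tsum_nonneg fun k => by have := hp k; positivity
  have hα₀ : 0 ≤ ∑' k : ℕ, ((k : ℝ) - 1) ^ 2 * p k :=
    tsum_nonneg fun k => mul_nonneg (sq_nonneg _) (hp k)
  calc _ = lam * s ^ 2 * x *
        |∑' k : ℕ, secondOrderRemainder f x (((k : ℝ) - 1) / s) * p k| := by
        rw [abs_mul, abs_of_nonneg (by positivity)]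
    _ ≤ lam * s ^ 2 * x * ((η * ∑' k : ℕ, ((k : ℝ) - 1) ^ 2 * p k + 2 * M * ∑' k : ℕ,
          (if δ * s < |(k : ℝ) - 1| then ((k : ℝ) - 1) ^ 2 * p k else 0)) / s ^ 2) := by
        gcongr
        exact abs_tsum_secondOrderRemainder_le hf hη hM hδ hp hp₂ hs x
    _ = lam * x * (η * ∑' k : ℕ, ((k : ℝ) - 1) ^ 2 * p k + 2 * M * ∑' k : ℕ,
          (if δ * s < |(k : ℝ) - 1| then ((k : ℝ) - 1) ^ 2 * p k else 0)) := by
        field_simp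
    _ ≤ _ := by
        gcongr
        · exact hx.2
        · exact tsum_ite_sq_sub_one_le hp hp₁ hsum hp₂ hδs hb m

end Remainder

theorem taylor_remainder_vanishes_uniformly_general
    (μ : ℕ → ℕ → ℝ) (lam c : ℕ → ℝ) (lamLim cLim αLim : ℝ)
    (hμnn : ∀ n k, 0 ≤ μ n k)
    (hμprob : ∀ n, 1 ≤ n → Summable (μ n) ∧ ∑' k, μ n k = 1)
    (hlam : ∀ n, 1 ≤ n → 0 < lam n)
    (hlamLim : Tendsto lam atTop (nhds lamLim))
    (hcLim : Tendsto c atTop (nhds cLim))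
    (hα : ∀ n, 1 ≤ n → Summable (fun k : ℕ => ((k : ℝ) - 1) ^ 2 * μ n k) ∧
      0 < ∑' k : ℕ, ((k : ℝ) - 1) ^ 2 * μ n k)
    (hαLim : Tendsto (fun n : ℕ => ∑' k : ℕ, ((k : ℝ) - 1) ^ 2 * μ n k)
      atTop (nhds αLim))
    (hlind : ∀ ε : ℝ, 0 < ε →
      Tendsto (fun n : ℕ => ∑' l : ℕ,
        if ε * Real.sqrt n < (l : ℝ) then ((l : ℝ) - (1 + c n / n)) ^ 2 * μ n l else 0)
        atTop (nhds 0))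
    (φ : ℝ → ℝ) (hφ : ContDiff ℝ 2 φ) (hφc : HasCompactSupport φ) :
    ∀ L : ℝ, 0 < L →
      Tendsto (fun n : ℕ =>
        sSup ((fun x : ℝ => |lam n * (n : ℝ) ^ 2 * x *
          ∑' k : ℕ, (φ (x + ((k : ℝ) - 1) / n) - φ x
            - (((k : ℝ) - 1) / n) * deriv φ x
            - (1 / 2) * (((k : ℝ) - 1) / n) ^ 2 * deriv (deriv φ) x) * μ n k|) ''
          Icc 0 L))
        atTop (nhds 0) := by
  intro L hL
  have hφ₂ : Continuous (deriv (deriv φ)) := hφ.deriv'.continuous_deriv le_rfl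
  obtain ⟨M, hM⟩ := hφc.deriv.deriv.exists_bound_of_continuous hφ₂
  refine tendsto_order.2 ⟨fun a ha => Eventually.of_forall fun n =>
    ha.trans_le (Real.sSup_nonneg (forall_mem_image.2 fun x _ => abs_nonneg _)), fun η hη => ?_⟩
  obtain ⟨η₀, hη₀, hsmall⟩ := exists_pos_mul_lt hη (lamLim * L * αLim)
  obtain ⟨δ, hδ, hmod⟩ := Metric.uniformContinuous_iff_le.1
    (hφc.deriv.deriv.uniformContinuous_of_continuous hφ₂) η₀ hη₀
  have hdrift : Tendsto (fun n : ℕ => 1 + c n / n - 1) atTop (nhds 0) := by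
    simpa using hcLim.div_atTop tendsto_natCast_atTop_atTop
  have hfar := (((hlind δ hδ).const_mul 2).add ((hdrift.pow 2).const_mul 2)).const_mul (2 * M)
  have hbound := ((hlamLim.mul_const L).mul ((hαLim.const_mul η₀).add hfar)).eventually_lt_const
    (hsmall.trans_eq' (by ring))
  filter_upwards [eventually_ge_atTop 1, hbound,
    (tendsto_natCast_atTop_atTop.const_mul_atTop hδ).eventually_ge_atTop 1] with n hn hBn hδn
  refine (csSup_le ((nonempty_Icc.2 hL.le).image _)
    (forall_mem_image.2 fun x hx => ?_)).trans_lt hBn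
  have hsqrt : δ * Real.sqrt n ≤ δ * n :=
    mul_le_mul_of_nonneg_left (Real.sqrt_le_self_iff.2 (Or.inr (by exact_mod_cast hn))) hδ.le
  exact abs_scaled_tsum_secondOrderRemainder_le hφ hη₀.le hM hmod (hμnn n) (hμprob n hn).1
    (hμprob n hn).2 (hα n hn).1 (by positivity) hδn hsqrt (hlam n hn).le hx _

/-- Uniform vanishing on compacts of the Taylor remainder of the scaled
branching generator: under the near-critical assumptions and the Lindeberg
condition on the offspring distributions `μ⁽ⁿ⁾`, for every `C²` compactly
supported `φ` and every `L > 0`,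
`sup_{0 ≤ x ≤ L} |R⁽ⁿ⁾(x)| → 0` as `n → ∞`, where
`R⁽ⁿ⁾(x) = λ⁽ⁿ⁾ n² x Σ_k [φ(x+(k−1)/n) − φ(x) − ((k−1)/n)φ'(x) −
(1/2)((k−1)/n)²φ''(x)] μ⁽ⁿ⁾(k)`. -/
theorem taylor_remainder_vanishes_uniformly
    (μ : ℕ → ℕ → ℝ) (lam c : ℕ → ℝ) (lamLim cLim αLim : ℝ)
    (hμnn : ∀ n k, 0 ≤ μ n k)
    (hμprob : ∀ n, 1 ≤ n → Summable (μ n) ∧ ∑' k, μ n k = 1)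
    (hlam : ∀ n, 1 ≤ n → 0 < lam n)
    (hlamLim : Tendsto lam atTop (nhds lamLim)) (hlamLim0 : 0 < lamLim)
    (hmean : ∀ n, 1 ≤ n → Summable (fun k : ℕ => (k : ℝ) * μ n k) ∧
      ∑' k : ℕ, (k : ℝ) * μ n k = 1 + c n / n)
    (hcLim : Tendsto c atTop (nhds cLim))
    (hα : ∀ n, 1 ≤ n → Summable (fun k : ℕ => ((k : ℝ) - 1) ^ 2 * μ n k) ∧
      0 < ∑' k : ℕ, ((k : ℝ) - 1) ^ 2 * μ n k)
    (hαLim : Tendsto (fun n : ℕ => ∑' k : ℕ, ((k : ℝ) - 1) ^ 2 * μ n k)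
      atTop (nhds αLim))
    (hαLim0 : 0 < αLim)
    (hlind : ∀ ε : ℝ, 0 < ε →
      Tendsto (fun n : ℕ => ∑' l : ℕ,
        if ε * Real.sqrt n < (l : ℝ) then ((l : ℝ) - (1 + c n / n)) ^ 2 * μ n l else 0)
        atTop (nhds 0))
    (φ : ℝ → ℝ) (hφ : ContDiff ℝ 2 φ) (hφc : HasCompactSupport φ) :
    ∀ L : ℝ, 0 < L →
      Tendsto (fun n : ℕ =>
        sSup ((fun x : ℝ => |lam n * (n : ℝ) ^ 2 * x *
          ∑' k : ℕ, (φ (x + ((k : ℝ) - 1) / n) - φ x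
            - (((k : ℝ) - 1) / n) * deriv φ x
            - (1 / 2) * (((k : ℝ) - 1) / n) ^ 2 * deriv (deriv φ) x) * μ n k|) ''
          Icc 0 L))
        atTop (nhds 0) :=
  taylor_remainder_vanishes_uniformly_general μ lam c lamLim cLim αLim hμnn hμprob hlam hlamLim
    hcLim hα hαLim hlind φ hφ hφc
end
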